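/- Let V be the upper probability on a measurable space (Ω,𝓕) generated by a nonempty set 𝒫 of finitely additive probabilities, assume V is continuous, and let θ : Ω → Ω be a measurable transformation preserving V. Then the following are all equivalent: (i) θ is ergodic with respect to V; (ii) for every B ∈ 𝓕 with V(θ⁻¹B △ B) = 0, either V(B) = 0 or V(Bᶜ) = 0; (iii) for every A ∈ 𝓕 with V(A) > 0, V((⋃_{n=1}^∞ θ^{−n}A)ᶜ) = 0; (iv) for all A, B ∈ 𝓕 with V(A) > 0 and V(B) > 0 there exists n ∈ ℕ with V(θ^{−n}A ∩ B) > 0. -/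

import Mathlib

open MeasureTheory Filter Topology Set

def IsFinAddProb {Ω : Type*} [MeasurableSpace Ω] (P : Set Ω → ℝ) : Prop :=
  P ∅ = 0 ∧ P Set.univ = 1 ∧
    (∀ A : Set Ω, MeasurableSet A → 0 ≤ P A ∧ P A ≤ 1) ∧
    (∀ A B : Set Ω, MeasurableSet A → MeasurableSet B → Disjoint A B →
      P (A ∪ B) = P A + P B)

def IsCapacity {Ω : Type*} [MeasurableSpace Ω] (μ : Set Ω → ℝ) : Prop :=
  μ ∅ = 0 ∧ μ Set.univ = 1 ∧
    ∀ A B : Set Ω, MeasurableSet A → MeasurableSet B → A ⊆ B → μ A ≤ μ B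

def ContBelow {Ω : Type*} [MeasurableSpace Ω] (μ : Set Ω → ℝ) : Prop :=
  ∀ A : ℕ → Set Ω, (∀ n, MeasurableSet (A n)) → Monotone A →
    Filter.Tendsto (fun n => μ (A n)) Filter.atTop (nhds (μ (⋃ n, A n)))

def ContAbove {Ω : Type*} [MeasurableSpace Ω] (μ : Set Ω → ℝ) : Prop :=
  ∀ A : ℕ → Set Ω, (∀ n, MeasurableSet (A n)) → Antitone A →
    Filter.Tendsto (fun n => μ (A n)) Filter.atTop (nhds (μ (⋂ n, A n)))

def ContAtEmpty {Ω : Type*} [MeasurableSpace Ω] (μ : Set Ω → ℝ) : Prop :=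
  ∀ A : ℕ → Set Ω, (∀ n, MeasurableSet (A n)) → Antitone A → (⋂ n, A n) = ∅ →
    Filter.Tendsto (fun n => μ (A n)) Filter.atTop (nhds 0)

def ContAtUniv {Ω : Type*} [MeasurableSpace Ω] (μ : Set Ω → ℝ) : Prop :=
  ∀ A : ℕ → Set Ω, (∀ n, MeasurableSet (A n)) → Monotone A → (⋃ n, A n) = Set.univ →
    Filter.Tendsto (fun n => μ (A n)) Filter.atTop (nhds 1)

def conjCap {Ω : Type*} (μ : Set Ω → ℝ) (A : Set Ω) : ℝ := 1 - μ Aᶜ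

noncomputable def choquet {Ω : Type*} (μ : Set Ω → ℝ) (ξ : Ω → ℝ) : ℝ :=
  (∫ t in Set.Ioi (0:ℝ), μ {ω | ξ ω ≥ t}) +
    (∫ t in Set.Iio (0:ℝ), (μ {ω | ξ ω ≥ t} - 1))

noncomputable def choquetE {Ω : Type*} (μ : Set Ω → ℝ) (ξ : Ω → EReal) : ℝ :=
  (∫ t in Set.Ioi (0:ℝ), μ {ω | (t : EReal) ≤ ξ ω}) +
    (∫ t in Set.Iio (0:ℝ), (μ {ω | (t : EReal) ≤ ξ ω} - 1))

def UpperProbOf {Ω : Type*} [MeasurableSpace Ω] (𝒮 : Set (Set Ω → ℝ)) (V : Set Ω → ℝ) : Prop :=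
  ∀ A : Set Ω, MeasurableSet A → V A = sSup ((fun P => P A) '' 𝒮)

def LowerProbOf {Ω : Type*} [MeasurableSpace Ω] (𝒮 : Set (Set Ω → ℝ)) (v : Set Ω → ℝ) : Prop :=
  ∀ A : Set Ω, MeasurableSet A → v A = sInf ((fun P => P A) '' 𝒮)

def ErgodicCap {Ω : Type*} [MeasurableSpace Ω] (μ : Set Ω → ℝ) (θ : Ω → Ω) : Prop :=
  ∀ B : Set Ω, MeasurableSet B → θ ⁻¹' B = B →
    (μ B = 0 ∨ μ B = 1) ∧ (μ B = 0 ∨ μ Bᶜ = 0)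

def PreservesCap {Ω : Type*} [MeasurableSpace Ω] (μ : Set Ω → ℝ) (θ : Ω → Ω) : Prop :=
  ∀ A : Set Ω, MeasurableSet A → μ (θ ⁻¹' A) = μ A

def IndepSigmaWrt {Ω : Type*} (μ : Set Ω → ℝ) (m₁ m₂ : MeasurableSpace Ω) : Prop :=
  ∀ A B : Set Ω, MeasurableSet[m₁] A → MeasurableSet[m₂] B → μ (A ∩ B) = μ A * μ B

/-!
Continuity of `V` from below makes countable unions of `V`-null sets null, which is all that is
needed to pass between strictly and almost invariant sets. For a set `A` of positive capacity,
`U = ⋃ₙ θ⁻ⁿ⁻¹ A` satisfies `θ⁻¹ U ⊆ U`, so `L = ⋂ₙ θ⁻ⁿ U` is strictly invariant; continuity from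
above and invariance of `V` give `V L = V U ≥ V A > 0`, and ergodicity forces `V Lᶜ = 0`, hence
`V Uᶜ = 0`. Conversely, an almost invariant `B` of positive capacity is, up to the null set
`⋃ₖ (θ⁻ᵏ B ∆ B)`, contained in `⋃ₙ θ⁻ⁿ⁻¹ B`, whose complement is null.
-/

open Function

def IsSubadditive {Ω : Type*} [MeasurableSpace Ω] (μ : Set Ω → ℝ) : Prop :=
  ∀ A B : Set Ω, MeasurableSet A → MeasurableSet B → μ (A ∪ B) ≤ μ A + μ B

namespace IsFinAddProb

variable {Ω : Type*} [MeasurableSpace Ω] {P : Set Ω → ℝ} {A B : Set Ω}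

lemma nonneg (hP : IsFinAddProb P) (hA : MeasurableSet A) : 0 ≤ P A := (hP.2.2.1 A hA).1

lemma le_one (hP : IsFinAddProb P) (hA : MeasurableSet A) : P A ≤ 1 := (hP.2.2.1 A hA).2

lemma union_eq_add_diff (hP : IsFinAddProb P) (hA : MeasurableSet A) (hB : MeasurableSet B) :
    P (A ∪ B) = P A + P (B \ A) := by
  rw [← union_sdiff_self]
  exact hP.2.2.2 A (B \ A) hA (hB.diff hA) disjoint_sdiff_right

lemma mono (hP : IsFinAddProb P) (hA : MeasurableSet A) (hB : MeasurableSet B) (hAB : A ⊆ B) :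
    P A ≤ P B := by
  have h := hP.union_eq_add_diff hA hB
  rw [union_eq_right.2 hAB] at h
  linarith [hP.nonneg (hB.diff hA)]

lemma union_le (hP : IsFinAddProb P) (hA : MeasurableSet A) (hB : MeasurableSet B) :
    P (A ∪ B) ≤ P A + P B := by
  rw [hP.union_eq_add_diff hA hB]
  linarith [hP.mono (hB.diff hA) hB sdiff_subset]

end IsFinAddProb

namespace UpperProbOf

variable {Ω : Type*} [MeasurableSpace Ω] {𝒮 : Set (Set Ω → ℝ)} {V : Set Ω → ℝ} {A : Set Ω}

lemma le_of_forall_le (hV : UpperProbOf 𝒮 V) (h𝒮 : 𝒮.Nonempty) (hA : MeasurableSet A) {c : ℝ}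
    (h : ∀ P ∈ 𝒮, P A ≤ c) : V A ≤ c := by
  rw [hV A hA]
  exact csSup_le (h𝒮.image _) (forall_mem_image.2 h)

lemma le_apply (hV : UpperProbOf 𝒮 V) (hP : ∀ P ∈ 𝒮, IsFinAddProb P) (hA : MeasurableSet A)
    {P : Set Ω → ℝ} (hP𝒮 : P ∈ 𝒮) : P A ≤ V A := by
  rw [hV A hA]
  exact le_csSup ⟨1, forall_mem_image.2 fun Q hQ => (hP Q hQ).le_one hA⟩ (mem_image_of_mem _ hP𝒮)

lemma isCapacity (hV : UpperProbOf 𝒮 V) (h𝒮 : 𝒮.Nonempty) (hP : ∀ P ∈ 𝒮, IsFinAddProb P) :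
    IsCapacity V := by
  obtain ⟨P, hP𝒮⟩ := h𝒮
  refine ⟨le_antisymm ?_ ?_, le_antisymm ?_ ?_, fun _ _ hA hB hAB => ?_⟩
  · exact hV.le_of_forall_le ⟨P, hP𝒮⟩ .empty fun Q hQ => (hP Q hQ).1.le
  · exact (hP P hP𝒮).1 ▸ hV.le_apply hP .empty hP𝒮
  · exact hV.le_of_forall_le ⟨P, hP𝒮⟩ .univ fun Q hQ => (hP Q hQ).2.1.le
  · exact (hP P hP𝒮).2.1 ▸ hV.le_apply hP .univ hP𝒮
  · exact hV.le_of_forall_le ⟨P, hP𝒮⟩ hA fun Q hQ =>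
      ((hP Q hQ).mono hA hB hAB).trans (hV.le_apply hP hB hQ)

lemma isSubadditive (hV : UpperProbOf 𝒮 V) (h𝒮 : 𝒮.Nonempty) (hP : ∀ P ∈ 𝒮, IsFinAddProb P) :
    IsSubadditive V := fun _ _ hA hB =>
  hV.le_of_forall_le h𝒮 (hA.union hB) fun Q hQ => ((hP Q hQ).union_le hA hB).trans
    (add_le_add (hV.le_apply hP hA hQ) (hV.le_apply hP hB hQ))

end UpperProbOf

namespace IsCapacity

variable {Ω : Type*} [MeasurableSpace Ω] {μ : Set Ω → ℝ} {A B N : Set Ω}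

lemma mono (hμ : IsCapacity μ) (hA : MeasurableSet A) (hB : MeasurableSet B) (hAB : A ⊆ B) :
    μ A ≤ μ B :=
  hμ.2.2 A B hA hB hAB

lemma nonneg (hμ : IsCapacity μ) (hA : MeasurableSet A) : 0 ≤ μ A :=
  hμ.1 ▸ hμ.mono .empty hA (empty_subset A)

lemma le_one (hμ : IsCapacity μ) (hA : MeasurableSet A) : μ A ≤ 1 :=
  hμ.2.1 ▸ hμ.mono hA .univ (subset_univ A)

lemma one_le_add_compl (hμ : IsCapacity μ) (hsub : IsSubadditive μ) (hA : MeasurableSet A) :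
    1 ≤ μ A + μ Aᶜ := by
  simpa only [union_compl_self, hμ.2.1] using hsub A Aᶜ hA hA.compl

lemma le_of_subset_union_null (hμ : IsCapacity μ) (hsub : IsSubadditive μ)
    (hA : MeasurableSet A) (hB : MeasurableSet B) (hN : MeasurableSet N) (hN0 : μ N = 0)
    (h : A ⊆ B ∪ N) : μ A ≤ μ B := by
  linarith [hμ.mono hA (hB.union hN) h, hsub B N hB hN]

lemma null_of_subset_union_null (hμ : IsCapacity μ) (hsub : IsSubadditive μ)
    (hA : MeasurableSet A) (hB : MeasurableSet B) (hN : MeasurableSet N) (hB0 : μ B = 0)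
    (hN0 : μ N = 0) (h : A ⊆ B ∪ N) : μ A = 0 :=
  le_antisymm (hB0 ▸ hμ.le_of_subset_union_null hsub hA hB hN hN0 h) (hμ.nonneg hA)

lemma iUnion_null (hμ : IsCapacity μ) (hsub : IsSubadditive μ) (hcont : ContBelow μ)
    {N : ℕ → Set Ω} (hN : ∀ n, MeasurableSet (N n)) (hN0 : ∀ n, μ (N n) = 0) :
    μ (⋃ n, N n) = 0 := by
  have hmeas (n : ℕ) : MeasurableSet (accumulate N n) := by
    rw [accumulate_def]
    exact .biUnion (to_countable _) fun k _ => hN k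
  have hacc (n : ℕ) : μ (accumulate N n) = 0 := by
    induction n with
    | zero => rw [accumulate_zero_nat, hN0]
    | succ n ih =>
      rw [accumulate_succ]
      exact hμ.null_of_subset_union_null hsub ((hmeas n).union (hN _)) (hmeas n) (hN _) ih
        (hN0 _) subset_rfl
  have h := hcont _ hmeas monotone_accumulate
  simp only [iUnion_accumulate, hacc] at h
  exact tendsto_nhds_unique h tendsto_const_nhds

end IsCapacity

section Iterate

variable {Ω : Type*} {θ : Ω → Ω} {A U : Set Ω}

lemma preimage_iUnion_preimage_iterate_succ_subset :
    θ ⁻¹' (⋃ n : ℕ, θ^[n + 1] ⁻¹' A) ⊆ ⋃ n : ℕ, θ^[n + 1] ⁻¹' A := by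
  rw [preimage_iUnion]
  exact iUnion_subset fun n =>
    subset_iUnion_of_subset (n + 1) (by rw [← preimage_comp, ← iterate_succ])

lemma antitone_preimage_iterate (hU : θ ⁻¹' U ⊆ U) : Antitone fun n => θ^[n] ⁻¹' U :=
  antitone_nat_of_succ_le fun n => by
    rw [iterate_succ', preimage_comp]
    exact preimage_mono hU

lemma preimage_iInter_preimage_iterate (hU : θ ⁻¹' U ⊆ U) :
    θ ⁻¹' (⋂ n, θ^[n] ⁻¹' U) = ⋂ n, θ^[n] ⁻¹' U := by
  simp only [preimage_iInter, ← preimage_comp, ← iterate_succ]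
  exact (antitone_preimage_iterate hU).iInter_nat_add 1

end Iterate

section Dynamics

variable {Ω : Type*} [MeasurableSpace Ω] {μ : Set Ω → ℝ} {θ : Ω → Ω} {A B U : Set Ω}

lemma PreservesCap.iterate (hpres : PreservesCap μ θ) (hθ : Measurable θ) (hA : MeasurableSet A)
    (n : ℕ) : μ (θ^[n] ⁻¹' A) = μ A := by
  induction n with
  | zero => rfl
  | succ n ih => rw [iterate_succ, preimage_comp, hpres _ (hθ.iterate n hA), ih]

lemma ContAbove.apply_iInter_preimage_iterate (hcont : ContAbove μ) (hpres : PreservesCap μ θ)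
    (hθ : Measurable θ) (hU : MeasurableSet U) (hUθ : θ ⁻¹' U ⊆ U) :
    μ (⋂ n, θ^[n] ⁻¹' U) = μ U := by
  have h := hcont _ (fun n => hθ.iterate n hU) (antitone_preimage_iterate hUθ)
  simp only [hpres.iterate hθ hU] at h
  exact tendsto_nhds_unique h tendsto_const_nhds

lemma null_symmDiff_preimage_iterate (hμ : IsCapacity μ) (hsub : IsSubadditive μ)
    (hpres : PreservesCap μ θ) (hθ : Measurable θ) (hB : MeasurableSet B)
    (hB0 : μ (symmDiff (θ ⁻¹' B) B) = 0) (k : ℕ) : μ (symmDiff (θ^[k] ⁻¹' B) B) = 0 := by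
  induction k with
  | zero => simpa using hμ.1
  | succ k ih =>
    have hθB : MeasurableSet (θ^[k] ⁻¹' B) := hθ.iterate k hB
    have hstep : μ (symmDiff (θ^[k + 1] ⁻¹' B) (θ^[k] ⁻¹' B)) = 0 := by
      rw [iterate_succ', preimage_comp, ← preimage_symmDiff,
        hpres.iterate hθ ((hθ hB).symmDiff hB), hB0]
    exact hμ.null_of_subset_union_null hsub ((hθ.iterate (k + 1) hB).symmDiff hB)
      ((hθ.iterate (k + 1) hB).symmDiff hθB) (hθB.symmDiff hB) hstep ih (symmDiff_triangle _ _ _)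

theorem ergodicCap_of_null_or_null_compl (hμ : IsCapacity μ) (hsub : IsSubadditive μ)
    (h : ∀ B : Set Ω, MeasurableSet B → μ (symmDiff (θ ⁻¹' B) B) = 0 → (μ B = 0 ∨ μ Bᶜ = 0)) :
    ErgodicCap μ θ := by
  intro B hB hinv
  have hB' := h B hB (by rw [hinv, symmDiff_self]; exact hμ.1)
  refine ⟨hB'.imp_right fun hBc => ?_, hB'⟩
  linarith [hμ.le_one hB, hμ.one_le_add_compl hsub hB]

theorem ErgodicCap.null_compl_iUnion_preimage_iterate (herg : ErgodicCap μ θ)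
    (hμ : IsCapacity μ) (hcont : ContAbove μ) (hpres : PreservesCap μ θ) (hθ : Measurable θ)
    (hA : MeasurableSet A) (hA0 : 0 < μ A) : μ ((⋃ n : ℕ, θ^[n + 1] ⁻¹' A)ᶜ) = 0 := by
  set U := ⋃ n : ℕ, θ^[n + 1] ⁻¹' A
  have hU : MeasurableSet U := .iUnion fun n => hθ.iterate (n + 1) hA
  have hUθ : θ ⁻¹' U ⊆ U := preimage_iUnion_preimage_iterate_succ_subset
  have hL : MeasurableSet (⋂ n, θ^[n] ⁻¹' U) := .iInter fun n => hθ.iterate n hU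
  have hLU : (⋂ n, θ^[n] ⁻¹' U) ⊆ U := iInter_subset _ 0
  have hU0 : 0 < μ U := hA0.trans_le <| hpres.iterate hθ hA 1 ▸
    hμ.mono (hθ.iterate 1 hA) hU (subset_iUnion (fun n => θ^[n + 1] ⁻¹' A) 0)
  obtain hL0 | hLc0 := (herg _ hL (preimage_iInter_preimage_iterate hUθ)).2
  · rw [hcont.apply_iInter_preimage_iterate hpres hθ hU hUθ] at hL0
    exact absurd hL0 hU0.ne'
  · exact le_antisymm (hLc0 ▸ hμ.mono hU.compl hL.compl (compl_subset_compl.2 hLU))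
      (hμ.nonneg hU.compl)

theorem null_or_null_compl_of_null_symmDiff_preimage (hμ : IsCapacity μ)
    (hsub : IsSubadditive μ) (hcont : ContBelow μ) (hpres : PreservesCap μ θ) (hθ : Measurable θ)
    (h : ∀ A : Set Ω, MeasurableSet A → 0 < μ A → μ ((⋃ n : ℕ, θ^[n + 1] ⁻¹' A)ᶜ) = 0)
    (hB : MeasurableSet B) (hB0 : μ (symmDiff (θ ⁻¹' B) B) = 0) : μ B = 0 ∨ μ Bᶜ = 0 := by
  refine (hμ.nonneg hB).eq_or_lt.imp Eq.symm fun hBpos => ?_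
  have hU : MeasurableSet (⋃ n : ℕ, θ^[n + 1] ⁻¹' B) := .iUnion fun n => hθ.iterate (n + 1) hB
  have hN : MeasurableSet (⋃ k, symmDiff (θ^[k] ⁻¹' B) B) :=
    .iUnion fun k => (hθ.iterate k hB).symmDiff hB
  refine hμ.null_of_subset_union_null hsub hB.compl hU.compl hN (h B hB hBpos)
    (hμ.iUnion_null hsub hcont (fun k => (hθ.iterate k hB).symmDiff hB)
      (null_symmDiff_preimage_iterate hμ hsub hpres hθ hB hB0)) fun x hx => ?_
  by_cases hxU : x ∈ ⋃ n : ℕ, θ^[n + 1] ⁻¹' B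
  · obtain ⟨n, hn⟩ := mem_iUnion.1 hxU
    exact Or.inr (mem_iUnion.2 ⟨n + 1, mem_symmDiff.2 (Or.inl ⟨hn, hx⟩)⟩)
  · exact Or.inl hxU

theorem exists_pos_preimage_iterate_inter (hμ : IsCapacity μ) (hsub : IsSubadditive μ)
    (hcont : ContBelow μ) (hθ : Measurable θ)
    (h : ∀ A : Set Ω, MeasurableSet A → 0 < μ A → μ ((⋃ n : ℕ, θ^[n + 1] ⁻¹' A)ᶜ) = 0)
    (hA : MeasurableSet A) (hB : MeasurableSet B) (hA0 : 0 < μ A) (hB0 : 0 < μ B) :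
    ∃ n : ℕ, 0 < μ (θ^[n + 1] ⁻¹' A ∩ B) := by
  by_contra! hAB
  have hAB_meas (n : ℕ) : MeasurableSet (θ^[n + 1] ⁻¹' A ∩ B) := (hθ.iterate (n + 1) hA).inter hB
  have hU : MeasurableSet (⋃ n : ℕ, θ^[n + 1] ⁻¹' A) := .iUnion fun n => hθ.iterate (n + 1) hA
  have hcover : B ⊆ (⋃ n : ℕ, θ^[n + 1] ⁻¹' A ∩ B) ∪ (⋃ n : ℕ, θ^[n + 1] ⁻¹' A)ᶜ := by
    rw [← iUnion_inter]
    intro x hx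
    by_cases hxU : x ∈ ⋃ n : ℕ, θ^[n + 1] ⁻¹' A
    exacts [Or.inl ⟨hxU, hx⟩, Or.inr hxU]
  have hB0' := hμ.null_of_subset_union_null hsub hB (.iUnion hAB_meas) hU.compl
    (hμ.iUnion_null hsub hcont hAB_meas fun n => (hAB n).antisymm (hμ.nonneg (hAB_meas n)))
    (h A hA hA0) hcover
  exact hB0.ne' hB0'

theorem null_compl_iUnion_preimage_iterate_of_exists_pos (hμ : IsCapacity μ) (hθ : Measurable θ)
    (h : ∀ A B : Set Ω, MeasurableSet A → MeasurableSet B → 0 < μ A → 0 < μ B →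
      ∃ n : ℕ, 0 < μ (θ^[n + 1] ⁻¹' A ∩ B))
    (hA : MeasurableSet A) (hA0 : 0 < μ A) : μ ((⋃ n : ℕ, θ^[n + 1] ⁻¹' A)ᶜ) = 0 := by
  have hU : MeasurableSet (⋃ n : ℕ, θ^[n + 1] ⁻¹' A)ᶜ :=
    (MeasurableSet.iUnion fun n => hθ.iterate (n + 1) hA).compl
  refine ((hμ.nonneg hU).eq_or_lt.resolve_right fun hUpos => ?_).symm
  obtain ⟨n, hn⟩ := h _ _ hA hU hA0 hUpos
  rw [((subset_iUnion (fun n => θ^[n + 1] ⁻¹' A) n).disjoint_compl_right).inter_eq, hμ.1] at hn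
  exact hn.false

end Dynamics

theorem stmt13 {Ω : Type*} [MeasurableSpace Ω]
    (𝒮 : Set (Set Ω → ℝ)) (h𝒮 : 𝒮.Nonempty) (hP : ∀ P ∈ 𝒮, IsFinAddProb P)
    (V : Set Ω → ℝ) (hV : UpperProbOf 𝒮 V) (hVb : ContBelow V) (hVa : ContAbove V)
    (θ : Ω → Ω) (hθ : Measurable θ) (hpres : PreservesCap V θ) :
    (ErgodicCap V θ ↔
      ∀ B : Set Ω, MeasurableSet B → V (symmDiff (θ ⁻¹' B) B) = 0 →
        (V B = 0 ∨ V Bᶜ = 0)) ∧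
    ((∀ B : Set Ω, MeasurableSet B → V (symmDiff (θ ⁻¹' B) B) = 0 →
        (V B = 0 ∨ V Bᶜ = 0)) ↔
      (∀ A : Set Ω, MeasurableSet A → 0 < V A →
        V ((⋃ n : ℕ, θ^[n + 1] ⁻¹' A)ᶜ) = 0)) ∧
    ((∀ A : Set Ω, MeasurableSet A → 0 < V A →
        V ((⋃ n : ℕ, θ^[n + 1] ⁻¹' A)ᶜ) = 0) ↔
      (∀ A B : Set Ω, MeasurableSet A → MeasurableSet B → 0 < V A → 0 < V B →
        ∃ n : ℕ, 0 < V (θ^[n + 1] ⁻¹' A ∩ B))) := by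
  have hcap := hV.isCapacity h𝒮 hP
  have hsub := hV.isSubadditive h𝒮 hP
  have i_iii (herg : ErgodicCap V θ) (A : Set Ω) (hA : MeasurableSet A) (hA0 : 0 < V A) :=
    herg.null_compl_iUnion_preimage_iterate hcap hVa hpres hθ hA hA0
  have iii_ii h (B : Set Ω) (hB : MeasurableSet B) :=
    null_or_null_compl_of_null_symmDiff_preimage hcap hsub hVb hpres hθ h hB
  have ii_i := ergodicCap_of_null_or_null_compl (θ := θ) hcap hsub
  refine ⟨⟨fun h => iii_ii (i_iii h), ii_i⟩, ⟨fun h => i_iii (ii_i h), iii_ii⟩, ?_, ?_⟩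
  · exact fun h A B hA hB => exists_pos_preimage_iterate_inter hcap hsub hVb hθ h hA hB
  · exact fun h A hA => null_compl_iUnion_preimage_iterate_of_exists_pos hcap hθ h hA
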